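/- arXiv:2403.04916 — 2 statements merged into one kernel-verified Lean document; each statement's English description precedes it below -/
import Mathlib

section
/- Let N ≥ 2 be an integer and β a real number with β > N, and define ψ(r) = (1 + (r-1)β)^{1/N} for real r ≥ 1. Then there exists a unique real number r̄ > 1 satisfying ψ(r̄) = r̄, and moreover ψ'(r̄) < 1. -/
/-!
For `r > 1`, `r ^ N - 1 = (r - 1) * ∑ i < N, r ^ i`, so `ψ r = r` exactly when the geometric sum
`∑ i < N, r ^ i` equals `β`. This sum is strictly increasing for `r ≥ 0`, equals `N < β` at `r = 1`
and exceeds `β` at `r = β`, which gives the unique fixed point `r̄`. By the inverse function rule,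
`ψ' r̄ = β / (N * r̄ ^ (N - 1))`, and `β = ∑ i < N, r̄ ^ i < N * r̄ ^ (N - 1)` since every term but
the last is smaller than `r̄ ^ (N - 1)`.
-/

open Finset

lemma one_add_le_geom_sum {R : Type*} [CommSemiring R] [PartialOrder R] [IsOrderedRing R]
    {N : ℕ} (hN : 2 ≤ N) {x : R} (hx : 0 ≤ x) : 1 + x ≤ ∑ i ∈ range N, x ^ i := by
  calc 1 + x = ∑ i ∈ range 2, x ^ i := by rw [geom_sum_two, add_comm]
    _ ≤ ∑ i ∈ range N, x ^ i :=
      sum_le_sum_of_subset_of_nonneg (range_subset_range.mpr hN) fun i _ _ => pow_nonneg hx i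

lemma strictMonoOn_geom_sum {R : Type*} [CommSemiring R] [PartialOrder R] [IsStrictOrderedRing R]
    {N : ℕ} (hN : 2 ≤ N) : StrictMonoOn (fun x : R => ∑ i ∈ range N, x ^ i) (Set.Ici 0) := by
  intro x hx y _ hxy
  exact sum_lt_sum (fun i _ => pow_le_pow_left₀ hx hxy.le i)
    ⟨1, mem_range.mpr hN, by simpa using hxy⟩

lemma geom_sum_lt_mul_pow {R : Type*} [CommSemiring R] [PartialOrder R] [IsStrictOrderedRing R]
    {N : ℕ} (hN : 2 ≤ N) {x : R} (hx : 1 < x) : ∑ i ∈ range N, x ^ i < N * x ^ (N - 1) := by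
  calc ∑ i ∈ range N, x ^ i < ∑ _i ∈ range N, x ^ (N - 1) :=
        sum_lt_sum (fun i hi => pow_le_pow_right₀ hx.le (by grind))
          ⟨0, mem_range.mpr (by omega), by simpa using one_lt_pow₀ hx (by omega : N - 1 ≠ 0)⟩
    _ = N * x ^ (N - 1) := by rw [sum_const, card_range, nsmul_eq_mul]

lemma one_add_mul_eq_pow_iff_geom_sum_eq {K : Type*} [Field K] (N : ℕ) {β r : K} (hr : r ≠ 1) :
    1 + (r - 1) * β = r ^ N ↔ ∑ i ∈ range N, r ^ i = β := by
  have hr1 : r - 1 ≠ 0 := sub_ne_zero.mpr hr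
  constructor
  · intro h
    apply mul_right_cancel₀ hr1
    linear_combination geom_sum_mul r N - h
  · intro h
    linear_combination geom_sum_mul r N - (r - 1) * h

lemma rpow_one_div_eq_iff_geom_sum_eq {N : ℕ} (hN : N ≠ 0) {β r : ℝ} (hβ : 0 ≤ β) (hr : 1 < r) :
    (1 + (r - 1) * β) ^ ((1 : ℝ) / N) = r ↔ ∑ i ∈ range N, r ^ i = β := by
  rw [one_div, Real.rpow_inv_eq (by nlinarith) (by linarith) (by exact_mod_cast hN),
    Real.rpow_natCast, one_add_mul_eq_pow_iff_geom_sum_eq N hr.ne']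

lemma existsUnique_one_lt_geom_sum_eq {N : ℕ} (hN : 2 ≤ N) {β : ℝ} (hβ : N < β) :
    ∃! r : ℝ, 1 < r ∧ ∑ i ∈ range N, r ^ i = β := by
  have hcont : Continuous fun x : ℝ => ∑ i ∈ range N, x ^ i := by fun_prop
  have hN2 : (2 : ℝ) ≤ N := by exact_mod_cast hN
  have hβ1 : 1 ≤ β := by linarith
  have hmem : β ∈ Set.Ioo (∑ i ∈ range N, (1 : ℝ) ^ i) (∑ i ∈ range N, β ^ i) := by
    refine ⟨by simpa using hβ, ?_⟩
    linarith [one_add_le_geom_sum hN (by linarith : (0 : ℝ) ≤ β)]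
  obtain ⟨r, ⟨hr1, -⟩, hr⟩ := intermediate_value_Ioo hβ1 hcont.continuousOn hmem
  refine ⟨r, ⟨hr1, hr⟩, fun s ⟨hs1, hs⟩ => ?_⟩
  exact (strictMonoOn_geom_sum hN).injOn (Set.mem_Ici.mpr (by linarith))
    (Set.mem_Ici.mpr (by linarith)) (hs.trans hr.symm)

lemma hasDerivAt_rpow_one_div_pow {N : ℕ} (hN : N ≠ 0) {r : ℝ} (hr : 0 < r) :
    HasDerivAt (fun x : ℝ => x ^ ((1 : ℝ) / N)) (1 / (N * r ^ (N - 1))) (r ^ N) := by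
  convert Real.hasDerivAt_rpow_const (Or.inl (pow_ne_zero N hr.ne')) using 1
  obtain ⟨n, rfl⟩ := Nat.exists_eq_succ_of_ne_zero hN
  rw [Real.rpow_sub_one (pow_ne_zero _ hr.ne'), one_div (n.succ : ℝ),
    Real.pow_rpow_inv_natCast hr.le hN, Nat.succ_sub_one, pow_succ]
  field_simp

theorem stmt_4 (N : ℕ) (hN : 2 ≤ N) (β : ℝ) (hβ : (N : ℝ) < β)
    (ψ : ℝ → ℝ) (hψ : ∀ r : ℝ, ψ r = (1 + (r - 1) * β) ^ ((1 : ℝ) / N)) :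
    (∃! rbar : ℝ, 1 < rbar ∧ ψ rbar = rbar) ∧
    (∀ rbar : ℝ, 1 < rbar → ψ rbar = rbar → deriv ψ rbar < 1) := by
  have hN0 : N ≠ 0 := by omega
  have hβ0 : 0 ≤ β := by linarith [(by positivity : (0 : ℝ) ≤ N)]
  have hfix : ∀ r : ℝ, 1 < r → (ψ r = r ↔ ∑ i ∈ range N, r ^ i = β) := fun r hr => by
    rw [hψ, rpow_one_div_eq_iff_geom_sum_eq hN0 hβ0 hr]
  refine ⟨?_, fun r hr hψr => ?_⟩
  · obtain ⟨r, ⟨hr, hsum⟩, huniq⟩ := existsUnique_one_lt_geom_sum_eq hN hβ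
    exact ⟨r, ⟨hr, (hfix r hr).mpr hsum⟩, fun s ⟨hs, hψs⟩ => huniq s ⟨hs, (hfix s hs).mp hψs⟩⟩
  have hsum := (hfix r hr).mp hψr
  have hroot := hasDerivAt_rpow_one_div_pow hN0 (by linarith : (0 : ℝ) < r)
  rw [← (one_add_mul_eq_pow_iff_geom_sum_eq N hr.ne').mpr hsum] at hroot
  have hinner : HasDerivAt (fun x : ℝ => 1 + (x - 1) * β) β r := by
    simpa using (((hasDerivAt_id r).sub_const 1).mul_const β).const_add 1
  have hD : HasDerivAt ψ (1 / (N * r ^ (N - 1)) * β) r := by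
    rw [funext hψ]
    exact hroot.comp r hinner
  rw [hD.deriv, one_div_mul_eq_div, div_lt_one (by positivity), ← hsum]
  exact geom_sum_lt_mul_pow hN hr
end

section
/- Let s be a positive integer, X an invertible s×s complex matrix, and ξ, q complex numbers with ξ ≠ 0 and q·ξ ≠ 1. Set θ = (1 − ξq)^{-1} and M(q) = ξ(X^{-1} − q·I) + θ·((I − q·X) − ξ(X^{-1} − q·I)), where I is the s×s identity matrix. If v is a nonzero vector with X·v = λ·v for some nonzero λ ∈ ℂ, then (I − θ·M(q))·v = (q(λ − ξ)² / (λ(1 − qξ)²))·v; that is, every eigenvalue λ of X gives rise to the eigenvalue q(λ − ξ)²/(λ(1 − qξ)²) of the iteration matrix I − θ·M(q). -/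
theorem stmt_9 (s : ℕ) (hs : 0 < s) (X : Matrix (Fin s) (Fin s) ℂ) (hX : IsUnit X)
    (ξ q : ℂ) (hξ : ξ ≠ 0) (hqξ : q * ξ ≠ 1)
    (θ : ℂ) (hθ : θ = (1 - ξ * q)⁻¹)
    (Mq : Matrix (Fin s) (Fin s) ℂ)
    (hMq : Mq = ξ • (X⁻¹ - q • (1 : Matrix (Fin s) (Fin s) ℂ)) +
        θ • ((1 - q • X) - ξ • (X⁻¹ - q • (1 : Matrix (Fin s) (Fin s) ℂ))))
    (v : Fin s → ℂ) (hv : v ≠ 0) (lam : ℂ) (hlam : lam ≠ 0)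
    (heig : X.mulVec v = lam • v) :
    ((1 : Matrix (Fin s) (Fin s) ℂ) - θ • Mq).mulVec v
      = (q * (lam - ξ) ^ 2 / (lam * (1 - q * ξ) ^ 2)) • v := by
  have hinv : X⁻¹.mulVec v = lam⁻¹ • v := by
    have h1 : X⁻¹.mulVec (X.mulVec v) = v := by
      rw [Matrix.mulVec_mulVec, Matrix.nonsing_inv_mul X ((Matrix.isUnit_iff_isUnit_det X).mp hX), Matrix.one_mulVec]
    rw [heig, Matrix.mulVec_smul] at h1
    calc X⁻¹.mulVec v = lam⁻¹ • (lam • X⁻¹.mulVec v) := by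
          rw [smul_smul, inv_mul_cancel₀ hlam, one_smul]
      _ = lam⁻¹ • v := by rw [h1]
  have hMv : Mq.mulVec v
      = (ξ * (lam⁻¹ - q) + θ * ((1 - q * lam) - ξ * (lam⁻¹ - q))) • v := by
    simp only [hMq, Matrix.add_mulVec, Matrix.smul_mulVec, Matrix.sub_mulVec,
      Matrix.one_mulVec, hinv, heig]
    module
  rw [Matrix.sub_mulVec, Matrix.one_mulVec, Matrix.smul_mulVec, hMv, smul_smul]
  rw [show v - (θ * (ξ * (lam⁻¹ - q) + θ * (1 - q * lam - ξ * (lam⁻¹ - q)))) • v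
      = (1 - θ * (ξ * (lam⁻¹ - q) + θ * (1 - q * lam - ξ * (lam⁻¹ - q)))) • v by
    rw [sub_smul, one_smul]]
  congr 1
  have h1 : (1 : ℂ) - ξ * q ≠ 0 := by
    intro h; apply hqξ; linear_combination -h
  have h2 : lam * (1 - q * ξ) ^ 2 ≠ 0 := by
    apply mul_ne_zero hlam (pow_ne_zero _ _)
    intro h; apply hqξ; linear_combination -h
  rw [hθ, eq_div_iff h2]
  field_simp
  ring
end
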